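/- arXiv:1010.1400 — 4 statements merged into one kernel-verified Lean document; each statement's English description precedes it below -/
import Mathlib

section
/- For every integer d ≥ 2, the function g_d(x) = (d+1)(x+1)e^{-x} + x(1-e^{-x})^{d+1} satisfies g_d(0) = d+1, and there exists a unique positive real c_d such that g_d(c_d) = d+1. -/
/-!
Put `h x = excess d x = g_d x - (d + 1) = x (1 - e⁻ˣ)^(d+1) - (d + 1)(1 - (x + 1) e⁻ˣ)`.
At every `x > 0` with `h x ≥ 0` the derivative `h' x` is positive: multiplying `h'` by
`x (1 - e⁻ˣ)` and using `h x ≥ 0` and `d + 1 ≥ 3` reduces this to a polynomial inequality in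
`x` and `eˣ - 1`, which follows from the cubic Taylor bound for `eˣ`. So once `h` reaches `0`
it can never come back down, and is strictly increasing from there on: `h` has at most one
positive zero. Since `h 1 < 0 < h ((d + 1) 2^(d+1))`, it has one.
-/

open Real Set

theorem strictMonoOn_Ici_of_deriv_pos_of_nonneg {f : ℝ → ℝ} {a : ℝ}
    (hf : Differentiable ℝ f) (ha : 0 ≤ f a)
    (hpos : ∀ x, a ≤ x → 0 ≤ f x → 0 < deriv f x) :
    StrictMonoOn f (Ici a) := by
  have hnonneg : ∀ x, a ≤ x → 0 ≤ f x := by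
    intro x hx
    -- `-f` starts below `0` and has negative derivative wherever it touches `0`
    have := image_le_of_deriv_right_lt_deriv_boundary (f := fun y => -f y)
      (f' := fun y => -deriv f y) (B := fun _ => 0) (B' := fun _ => 0) (b := x)
      hf.continuous.neg.continuousOn (fun y _ => (hf y).hasDerivAt.neg.hasDerivWithinAt)
      (by simpa using ha) (fun _ => hasDerivAt_const _ _)
      (fun y hy hy0 => neg_lt_zero.2 (hpos y hy.1 (by linarith)))
      ⟨hx, le_rfl⟩
    simpa using this
  refine strictMonoOn_of_deriv_pos (convex_Ici a) hf.continuous.continuousOn fun x hx => ?_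
  rw [interior_Ici] at hx
  exact hpos x hx.le (hnonneg x hx.le)

noncomputable def excess (d : ℕ) (x : ℝ) : ℝ :=
  x * (1 - exp (-x)) ^ (d + 1) - (d + 1) * (1 - (x + 1) * exp (-x))

theorem hasDerivAt_excess (d : ℕ) (x : ℝ) :
    HasDerivAt (excess d) ((1 - exp (-x)) ^ (d + 1)
      + (d + 1) * x * (1 - exp (-x)) ^ d * exp (-x) - (d + 1) * x * exp (-x)) x := by
  have he : HasDerivAt (fun y => exp (-y)) (-exp (-x)) x := by
    simpa using (hasDerivAt_neg x).exp
  have h := ((hasDerivAt_id' x).fun_mul ((he.const_sub 1).fun_pow (d + 1))).fun_sub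
    ((((hasDerivAt_id' x).add_const 1).fun_mul he).const_sub 1 |>.const_mul ((d : ℝ) + 1))
  refine h.congr_deriv ?_
  simp only [add_tsub_cancel_right, Nat.cast_add, Nat.cast_one]
  ring

theorem differentiable_excess (d : ℕ) : Differentiable ℝ (excess d) :=
  fun x => (hasDerivAt_excess d x).differentiableAt

theorem one_sub_add_one_mul_exp_neg_pos {x : ℝ} (hx : 0 < x) :
    0 < 1 - (x + 1) * exp (-x) := by
  have := mul_lt_mul_of_pos_right (add_one_lt_exp hx.ne') (exp_pos (-x))
  rwa [← exp_add, add_neg_cancel, exp_zero, ← sub_pos] at this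

theorem sq_mul_lt_of_taylor_le {x y : ℝ} (hx : 0 < x) (hy : x + x ^ 2 / 2 + x ^ 3 / 6 ≤ y) :
    x ^ 2 * y < (y - x) * (y + 3 * x) := by
  have hsum : 0 ≤ y + x + x ^ 2 / 2 + x ^ 3 / 6 + 2 * x - x ^ 2 := by nlinarith
  nlinarith [mul_nonneg (sub_nonneg.2 hy) hsum, pow_pos hx 3, pow_pos hx 4, pow_pos hx 6]

theorem sq_mul_exp_neg_mul_lt {x : ℝ} (hx : 0 < x) :
    x ^ 2 * exp (-x) * (1 - exp (-x)) <
      (1 - (x + 1) * exp (-x)) * (1 - exp (-x) + 3 * x * exp (-x)) := by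
  have htaylor : x + x ^ 2 / 2 + x ^ 3 / 6 ≤ exp x - 1 := by
    have := sum_le_exp_of_nonneg hx.le 4
    simp [Finset.sum_range_succ, Nat.factorial] at this
    linarith
  have key := sq_mul_lt_of_taylor_le hx htaylor
  have hts : exp (-x) * exp x = 1 := by rw [← exp_add, neg_add_cancel, exp_zero]
  have hlhs : x ^ 2 * exp (-x) * (1 - exp (-x)) = x ^ 2 * (exp x - 1) * exp (-x) ^ 2 := by
    linear_combination (-x ^ 2 * exp (-x)) * hts
  have hrhs : (1 - (x + 1) * exp (-x)) * (1 - exp (-x) + 3 * x * exp (-x)) =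
      (exp x - 1 - x) * (exp x - 1 + 3 * x) * exp (-x) ^ 2 := by
    linear_combination (-((exp x - 1 - x) * exp (-x) + (exp x - 1 + 3 * x) * exp (-x)
      + 1 - exp (-x) * exp x)) * hts
  rw [hlhs, hrhs]
  exact mul_lt_mul_of_pos_right key (by positivity)

theorem deriv_excess_pos {d : ℕ} (hd : 2 ≤ d) {x : ℝ} (hx : 0 < x) (h : 0 ≤ excess d x) :
    0 < deriv (excess d) x := by
  rw [(hasDerivAt_excess d x).deriv]
  have hkey := sq_mul_exp_neg_mul_lt hx
  have hA := one_sub_add_one_mul_exp_neg_pos hx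
  have hc : (3 : ℝ) ≤ d + 1 := by norm_cast; omega
  unfold excess at h
  set t := exp (-x)
  set c : ℝ := d + 1
  have ht : 0 < t := exp_pos _
  have hu : 0 < 1 - t := sub_pos.2 (exp_lt_one_iff.2 (neg_lt_zero.2 hx))
  set A := 1 - (x + 1) * t
  set w := (1 - t) ^ d
  have hw : (1 - t) ^ (d + 1) = (1 - t) * w := pow_succ' _ _
  rw [hw] at h ⊢
  -- `x (1 - t) h' ≥ c (A (1 - t + 3 x t) - x² t (1 - t))`, using `c A ≤ x (1 - t)^(d+1)`
  -- and `c ≥ 3`; the right side is positive by `sq_mul_exp_neg_mul_lt`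
  refine pos_of_mul_pos_right (a := x * (1 - t)) ?_ (mul_pos hx hu).le
  nlinarith [mul_le_mul_of_nonneg_left h hu.le,
    mul_le_mul_of_nonneg_left h (by positivity : 0 ≤ c * x * t),
    mul_le_mul_of_nonneg_right hc (by positivity : 0 ≤ x * t * A),
    mul_lt_mul_of_pos_left hkey (by positivity : 0 < c)]

theorem excess_one_neg {d : ℕ} (hd : 2 ≤ d) : excess d 1 < 0 := by
  have hlo := exp_neg_one_gt_d9
  have hhi := exp_neg_one_lt_d9
  have hc : (3 : ℝ) ≤ d + 1 := by norm_cast; omega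
  unfold excess
  set t := exp (-1)
  have hpow : (1 - t) ^ (d + 1) ≤ (1 - t) ^ 3 :=
    pow_le_pow_of_le_one (by linarith) (by linarith) (by omega)
  have hcube : (1 - t) ^ 3 ≤ 0.64 ^ 3 := pow_le_pow_left₀ (by linarith) (by linarith) 3
  nlinarith [mul_le_mul_of_nonneg_right hc (by linarith : (0 : ℝ) ≤ 1 - (1 + 1) * t)]

theorem one_le_succ_mul_two_pow (d : ℕ) : (1 : ℝ) ≤ (d + 1) * 2 ^ (d + 1) :=
  one_le_mul_of_one_le_of_one_le (by linarith [d.cast_nonneg (α := ℝ)])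
    (one_le_pow₀ one_le_two)

theorem excess_pos (d : ℕ) : 0 < excess d ((d + 1) * 2 ^ (d + 1)) := by
  have hx := one_le_succ_mul_two_pow d
  set x : ℝ := (d + 1) * 2 ^ (d + 1)
  have ht : exp (-x) ≤ 1 / 2 := by
    rw [exp_neg]
    exact inv_le_of_inv_le₀ (by norm_num) (by linarith [add_one_le_exp x])
  have hpow : (1 / 2 : ℝ) ^ (d + 1) ≤ (1 - exp (-x)) ^ (d + 1) :=
    pow_le_pow_left₀ (by norm_num) (by linarith) _
  have hxpow : x * (1 / 2) ^ (d + 1) = d + 1 := by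
    simp only [x, mul_assoc, ← mul_pow]; norm_num
  have hA : 0 < (x + 1) * exp (-x) := by positivity
  unfold excess
  nlinarith [mul_le_mul_of_nonneg_left hpow (by linarith : 0 ≤ x)]

theorem strictMonoOn_excess {d : ℕ} (hd : 2 ≤ d) {a : ℝ} (ha : 0 < a) (h : 0 ≤ excess d a) :
    StrictMonoOn (excess d) (Ici a) :=
  strictMonoOn_Ici_of_deriv_pos_of_nonneg (differentiable_excess d) h
    fun _ hx => deriv_excess_pos hd (ha.trans_le hx)

theorem eq_of_excess_eq_zero {d : ℕ} (hd : 2 ≤ d) {a b : ℝ} (ha : 0 < a) (hb : 0 < b)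
    (ha0 : excess d a = 0) (hb0 : excess d b = 0) : a = b := by
  wlog hab : a ≤ b generalizing a b
  · exact (this hb ha hb0 ha0 (le_of_not_ge hab)).symm
  exact (strictMonoOn_excess hd ha ha0.ge).injOn self_mem_Ici hab (ha0.trans hb0.symm)

/-- For every integer `d ≥ 2`, the function
`g_d(x) = (d+1)(x+1)e^{-x} + x(1-e^{-x})^{d+1}` satisfies `g_d 0 = d+1`,
and there exists a unique positive real `c` with `g_d c = d+1`. -/
theorem stmt0 (d : ℕ) (hd : 2 ≤ d)
    (g : ℝ → ℝ)
    (hg : ∀ x : ℝ, g x =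
      (d + 1) * (x + 1) * Real.exp (-x) + x * (1 - Real.exp (-x)) ^ (d + 1)) :
    g 0 = d + 1 ∧ ∃! c : ℝ, 0 < c ∧ g c = d + 1 := by
  have hiff : ∀ x, g x = d + 1 ↔ excess d x = 0 := fun x => by
    rw [hg, excess, ← sub_eq_zero]
    ring_nf
  refine ⟨by simp [hg], ?_⟩
  obtain ⟨c, hc, hc0⟩ := intermediate_value_Icc (one_le_succ_mul_two_pow d)
    (differentiable_excess d).continuous.continuousOn
    ⟨(excess_one_neg hd).le, (excess_pos d).le⟩
  have hcpos : 0 < c := one_pos.trans_le hc.1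
  refine ⟨c, ⟨hcpos, (hiff c).2 hc0⟩, fun y ⟨hy, hgy⟩ => ?_⟩
  exact eq_of_excess_eq_zero hd hy hcpos ((hiff y).1 hgy) hc0
end

section
/- For every integer d ≥ 2, the unique positive solution c_d of g_d(x) = d+1 satisfies c_d < d+1. -/
/-- For every integer `d ≥ 2`, the unique positive solution `c_d` of
`g_d(x) = d+1` satisfies `c_d < d+1`, where
`g_d(x) = (d+1)(x+1)e^{-x} + x(1-e^{-x})^{d+1}`. -/
theorem stmt1 (d : ℕ) (hd : 2 ≤ d)
    (g : ℝ → ℝ)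
    (hg : ∀ x : ℝ, g x =
      (d + 1) * (x + 1) * Real.exp (-x) + x * (1 - Real.exp (-x)) ^ (d + 1))
    (c : ℝ) (hc : 0 < c) (hgc : g c = d + 1)
    (huniq : ∀ x : ℝ, 0 < x → g x = d + 1 → x = c) :
    c < d + 1 := by
  set E : ℝ := Real.exp (-c) with hEdef
  have hE : 0 < E := Real.exp_pos _
  have hE1 : E < 1 := by
    rw [hEdef, ← Real.exp_zero]
    exact Real.exp_lt_exp.mpr (by linarith)
  have hb : 1 + (d + 1 : ℕ) * (-E) ≤ (1 + (-E)) ^ (d + 1) :=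
    one_add_mul_le_pow (by linarith) (d + 1)
  have key := hgc
  rw [hg c] at key
  have heq : (1 : ℝ) + (-E) = 1 - E := by ring
  rw [heq] at hb
  have hb' : 1 - ((d : ℝ) + 1) * E ≤ (1 - E) ^ (d + 1) := by
    push_cast at hb
    linarith [hb]
  have hcmul : c * (1 - ((d : ℝ) + 1) * E) ≤ c * (1 - E) ^ (d + 1) :=
    mul_le_mul_of_nonneg_left hb' hc.le
  nlinarith [mul_pos hE hc, hE, hc]
end

section
/- The function v on Y_d(n,p), defined as v(Y) = f_d(Y) + u(Y) - C(n,d) with u(Y) = a(Y) + Σ_{j=0}^{d} α_j(Y)(d-j), changes by at most 2d^3 when a single d-simplex is added to or removed from Y. -/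
/-- The degree of a `(d-1)`-face `τ` in the complex with `d`-face set `S`. -/
def stmt9Deg {n : ℕ} (S : Finset (Finset (Fin n))) (τ : Finset (Fin n)) : ℕ :=
  (S.filter (fun σ => τ ⊆ σ)).card

/-- `a(Y)`: the number of `(d-1)`-faces of `Δ_{n-1}` (i.e. `d`-element subsets)
contained in no `d`-face of `Y`. -/
def stmt9A {n : ℕ} (d : ℕ) (S : Finset (Finset (Fin n))) : ℕ :=
  (((Finset.univ : Finset (Fin n)).powersetCard d).filter
    (fun τ => stmt9Deg S τ = 0)).card

/-- `α_j(Y)`: the number of `d`-faces of `Y` having exactly `d+1-j` faces of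
dimension `d-1` of degree `1` in `Y`. -/
def stmt9Alpha {n : ℕ} (d j : ℕ) (S : Finset (Finset (Fin n))) : ℕ :=
  (S.filter (fun σ =>
    ((σ.powersetCard d).filter (fun τ => stmt9Deg S τ = 1)).card = d + 1 - j)).card

/-- `v(Y) = f_d(Y) + a(Y) + Σ_{j=0}^d α_j(Y)(d-j) - C(n,d)` (as an integer). -/
def stmt9V (n d : ℕ) (S : Finset (Finset (Fin n))) : ℤ :=
  (S.card : ℤ) + (stmt9A d S : ℤ) +
    ∑ j ∈ Finset.range (d + 1), (stmt9Alpha d j S : ℤ) * ((d : ℤ) - (j : ℤ)) -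
    (n.choose d : ℤ)

open Finset

/-- Auxiliary: the count of degree-one faces of a simplex. -/
def cnt9 {n : ℕ} (d : ℕ) (S : Finset (Finset (Fin n))) (σ' : Finset (Fin n)) : ℕ :=
  ((σ'.powersetCard d).filter (fun τ => stmt9Deg S τ = 1)).card

lemma stmt9_deg_mono {n : ℕ} {S S' : Finset (Finset (Fin n))} (h : S ⊆ S')
    (τ : Finset (Fin n)) :
    stmt9Deg S τ ≤ stmt9Deg S' τ := card_le_card (filter_subset_filter _ h)

lemma stmt9_deg_insert {n : ℕ} {S : Finset (Finset (Fin n))} {σ : Finset (Fin n)} (hσ : σ ∉ S)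
    (τ : Finset (Fin n)) :
    stmt9Deg (insert σ S) τ = stmt9Deg S τ + if τ ⊆ σ then 1 else 0 := by
  unfold stmt9Deg
  rw [filter_insert]
  split
  · rw [card_insert_of_notMem (fun h => hσ (mem_filter.mp h).1)]
  · simp

lemma stmt9_key_a {n : ℕ} (d : ℕ) (T : Finset (Finset (Fin n))) (σ : Finset (Fin n))
    (hσ : σ.card = d + 1) (hσT : σ ∉ T) :
    |(stmt9A d T : ℤ) - stmt9A d (insert σ T)| ≤ d + 1 := by
  classical
  set F := (Finset.univ : Finset (Fin n)).powersetCard d with hF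
  set A := F.filter (fun τ => stmt9Deg T τ = 0) with hA
  set B := F.filter (fun τ => stmt9Deg (insert σ T) τ = 0) with hB
  have hBA : B ⊆ A := by
    intro τ hτ
    simp only [hA, hB, mem_filter] at *
    exact ⟨hτ.1, Nat.eq_zero_of_le_zero (hτ.2 ▸ stmt9_deg_mono (subset_insert _ _) τ)⟩
  have hdiff : A \ B ⊆ σ.powersetCard d := by
    intro τ hτ
    obtain ⟨h1, h2⟩ := mem_sdiff.mp hτ
    simp only [hA, hB, hF, mem_filter, mem_powersetCard_univ] at h1 h2
    rw [mem_powersetCard]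
    refine ⟨?_, h1.1⟩
    by_contra hsub
    rw [stmt9_deg_insert hσT τ, h1.2, if_neg hsub] at h2
    exact h2 ⟨h1.1, rfl⟩
  have hcard : (A \ B).card + B.card = A.card := card_sdiff_add_card_eq_card hBA
  have hle : (A \ B).card ≤ d + 1 := by
    calc (A \ B).card ≤ (σ.powersetCard d).card := card_le_card hdiff
    _ = d + 1 := by rw [card_powersetCard, hσ, Nat.choose_succ_self_right]
  have e1 : stmt9A d T = A.card := rfl
  have e2 : stmt9A d (insert σ T) = B.card := rfl
  rw [e1, e2, abs_le]
  constructor <;> push_cast <;> omega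

lemma stmt9_key_alpha {n : ℕ} (d j : ℕ) (hj : j ≤ d) (T : Finset (Finset (Fin n)))
    (σ : Finset (Fin n)) (hσ : σ.card = d + 1) (hσT : σ ∉ T)
    (hT : ∀ s ∈ T, s.card = d + 1) :
    |(stmt9Alpha d j T : ℤ) - stmt9Alpha d j (insert σ T)| ≤ d + 1 := by
  classical
  set A := T.filter (fun σ' => cnt9 d T σ' = d + 1 - j) with hA
  set B := (insert σ T).filter (fun σ' => cnt9 d (insert σ T) σ' = d + 1 - j) with hB
  set Ch := T.filter (fun σ' => cnt9 d T σ' ≠ cnt9 d (insert σ T) σ') with hCh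
  set T1 := (σ.powersetCard d).filter (fun τ => stmt9Deg T τ = 1) with hT1
  have hmem : ∀ σ' ∈ Ch, σ ∩ σ' ∈ T1 := by
    intro σ' hσ'
    obtain ⟨hσ'T, hne⟩ := mem_filter.mp hσ'
    have hex : ∃ τ ∈ σ'.powersetCard d,
        ¬(stmt9Deg T τ = 1 ↔ stmt9Deg (insert σ T) τ = 1) := by
      by_contra h
      push_neg at h
      apply hne
      unfold cnt9
      congr 1
      exact filter_congr (fun τ hτ => h τ hτ)
    obtain ⟨τ, hτmem, hτ⟩ := hex
    obtain ⟨hτσ', hτcard⟩ := mem_powersetCard.mp hτmem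
    have hsub : τ ⊆ σ := by
      by_contra hs
      rw [stmt9_deg_insert hσT τ, if_neg hs] at hτ
      simp at hτ
    have hge : 1 ≤ stmt9Deg T τ :=
      card_pos.mpr ⟨σ', mem_filter.mpr ⟨hσ'T, hτσ'⟩⟩
    have hdeg1 : stmt9Deg T τ = 1 := by
      rw [stmt9_deg_insert hσT τ, if_pos hsub] at hτ
      omega
    have hτsub : τ ⊆ σ ∩ σ' := subset_inter hsub hτσ'
    have hσne : σ ≠ σ' := fun h => hσT (h ▸ hσ'T)
    have hcard' : (σ ∩ σ').card ≤ d := by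
      by_contra hc
      push_neg at hc
      have h1 : σ ∩ σ' = σ :=
        eq_of_subset_of_card_le inter_subset_left (by omega)
      have h2 : σ = σ' :=
        eq_of_subset_of_card_le (h1 ▸ inter_subset_right)
          (by rw [hσ, hT σ' hσ'T])
      exact hσne h2
    have heq : τ = σ ∩ σ' := eq_of_subset_of_card_le hτsub (by omega)
    rw [← heq]
    exact mem_filter.mpr ⟨mem_powersetCard.mpr ⟨hsub, hτcard⟩, hdeg1⟩
  have hChT1 : Ch.card ≤ T1.card := by
    apply card_le_card_of_injOn (fun σ' => σ ∩ σ') hmem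
    intro x hx y hy hxy
    have hdeg : stmt9Deg T (σ ∩ x) = 1 := (mem_filter.mp (hmem x hx)).2
    have hxm : x ∈ T.filter (fun s => σ ∩ x ⊆ s) :=
      mem_filter.mpr ⟨(mem_filter.mp hx).1, inter_subset_right⟩
    have hym : y ∈ T.filter (fun s => σ ∩ x ⊆ s) :=
      mem_filter.mpr ⟨(mem_filter.mp hy).1, by
        simp only at hxy
        rw [hxy]; exact inter_subset_right⟩
    exact card_le_one.mp (le_of_eq hdeg) x hxm y hym
  have hT1le : T1.card ≤ d + 1 := by
    calc T1.card ≤ (σ.powersetCard d).card := card_le_card (filter_subset _ _)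
    _ = d + 1 := by rw [card_powersetCard, hσ, Nat.choose_succ_self_right]
  have hAB : A \ B ⊆ Ch := by
    intro x hx
    obtain ⟨hxa, hxb⟩ := mem_sdiff.mp hx
    obtain ⟨hxT, hxc⟩ := mem_filter.mp hxa
    refine mem_filter.mpr ⟨hxT, fun he => ?_⟩
    exact hxb (mem_filter.mpr ⟨mem_insert_of_mem hxT, he ▸ hxc⟩)
  have hBA : B \ A ⊆ insert σ Ch := by
    intro x hx
    obtain ⟨hxb, hxa⟩ := mem_sdiff.mp hx
    obtain ⟨hxT', hxc⟩ := mem_filter.mp hxb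
    rcases mem_insert.mp hxT' with h | h
    · exact h ▸ mem_insert_self _ _
    · refine mem_insert_of_mem (mem_filter.mpr ⟨h, fun he => ?_⟩)
      exact hxa (mem_filter.mpr ⟨h, he.symm ▸ hxc⟩)
  have c1 : (A ∩ B).card + (A \ B).card = A.card := card_inter_add_card_sdiff A B
  have c2 : (B ∩ A).card + (B \ A).card = B.card := card_inter_add_card_sdiff B A
  have c3 : (A ∩ B).card = (B ∩ A).card := by rw [inter_comm]
  have c4 : (A \ B).card ≤ Ch.card := card_le_card hAB
  have e1 : stmt9Alpha d j T = A.card := rfl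
  have e2 : stmt9Alpha d j (insert σ T) = B.card := rfl
  rw [e1, e2]
  by_cases hσB : σ ∈ B
  · have hcntσ : cnt9 d (insert σ T) σ = d + 1 - j := (mem_filter.mp hσB).2
    have hpos : 0 < cnt9 d (insert σ T) σ := by omega
    have hne : ((σ.powersetCard d).filter
        (fun τ => stmt9Deg (insert σ T) τ = 1)).Nonempty := card_pos.mp hpos
    obtain ⟨τ0, hτ0⟩ := hne
    obtain ⟨hτ0m, hτ0d⟩ := mem_filter.mp hτ0
    have hτ0σ : τ0 ⊆ σ := (mem_powersetCard.mp hτ0m).1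
    have hτ0T : stmt9Deg T τ0 = 0 := by
      rw [stmt9_deg_insert hσT τ0, if_pos hτ0σ] at hτ0d; omega
    have hτ0T1 : τ0 ∉ T1 := by
      intro h
      rw [(mem_filter.mp h).2] at hτ0T
      exact one_ne_zero hτ0T
    have hT1d : T1.card ≤ d := by
      have hss : T1 ⊂ σ.powersetCard d :=
        ⟨filter_subset _ _, fun h => hτ0T1 (h hτ0m)⟩
      have := card_lt_card hss
      rw [card_powersetCard, hσ, Nat.choose_succ_self_right] at this
      omega
    have c6 : (B \ A).card ≤ Ch.card + 1 :=
      le_trans (card_le_card hBA) (card_insert_le _ _)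
    rw [abs_le]
    constructor <;> push_cast <;> omega
  · have hBA' : B \ A ⊆ Ch := by
      intro x hx
      rcases mem_insert.mp (hBA hx) with h | h
      · exact absurd (h ▸ (mem_sdiff.mp hx).1) hσB
      · exact h
    have c6 : (B \ A).card ≤ Ch.card := card_le_card hBA'
    rw [abs_le]
    constructor <;> push_cast <;> omega

lemma stmt9_gauss_sum (d : ℕ) :
    (∑ j ∈ Finset.range (d + 1), ((d : ℤ) - (j : ℤ))) * 2 = ((d : ℤ) + 1) * d := by
  have h1 : ∑ j ∈ Finset.range (d + 1), ((d : ℤ) - (j : ℤ)) =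
      ∑ j ∈ Finset.range (d + 1), ((d - j : ℕ) : ℤ) := by
    refine Finset.sum_congr rfl (fun j hj => ?_)
    have := Finset.mem_range.mp hj
    rw [Nat.cast_sub (by omega)]
  have h2 : ∑ j ∈ Finset.range (d + 1), (d - j) = ∑ j ∈ Finset.range (d + 1), j := by
    have := Finset.sum_range_reflect (fun i => i) (d + 1)
    simpa using this
  have h3 : (∑ i ∈ Finset.range (d + 1), i) * 2 = (d + 1) * d := by
    simpa using Finset.sum_range_id_mul_two (d + 1)
  rw [h1, ← Nat.cast_sum, h2]
  exact_mod_cast h3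

lemma stmt9_key_v (n d : ℕ) (hd : 2 ≤ d) (T : Finset (Finset (Fin n)))
    (σ : Finset (Fin n)) (hσ : σ.card = d + 1) (hσT : σ ∉ T)
    (hT : ∀ s ∈ T, s.card = d + 1) :
    |stmt9V n d T - stmt9V n d (insert σ T)| ≤ 2 * d ^ 3 := by
  have hcard : ((insert σ T).card : ℤ) = (T.card : ℤ) + 1 := by
    rw [card_insert_of_notMem hσT]; push_cast; ring
  have hexpand : stmt9V n d T - stmt9V n d (insert σ T) =
      (((T.card : ℤ) - (insert σ T).card) + ((stmt9A d T : ℤ) - stmt9A d (insert σ T))) +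
      ∑ j ∈ Finset.range (d + 1),
        ((stmt9Alpha d j T : ℤ) - stmt9Alpha d j (insert σ T)) * ((d : ℤ) - (j : ℤ)) := by
    unfold stmt9V
    simp only [sub_mul]
    rw [Finset.sum_sub_distrib]
    ring
  set Sg := ∑ j ∈ Finset.range (d + 1), ((d : ℤ) - (j : ℤ)) with hSgdef
  have hSg : Sg * 2 = ((d : ℤ) + 1) * d := stmt9_gauss_sum d
  have hα : |∑ j ∈ Finset.range (d + 1),
      ((stmt9Alpha d j T : ℤ) - stmt9Alpha d j (insert σ T)) * ((d : ℤ) - (j : ℤ))| ≤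
      ((d : ℤ) + 1) * Sg := by
    calc |∑ j ∈ Finset.range (d + 1),
        ((stmt9Alpha d j T : ℤ) - stmt9Alpha d j (insert σ T)) * ((d : ℤ) - (j : ℤ))|
        ≤ ∑ j ∈ Finset.range (d + 1),
          |((stmt9Alpha d j T : ℤ) - stmt9Alpha d j (insert σ T)) * ((d : ℤ) - (j : ℤ))| :=
          Finset.abs_sum_le_sum_abs _ _
      _ ≤ ∑ j ∈ Finset.range (d + 1), ((d : ℤ) + 1) * ((d : ℤ) - (j : ℤ)) := by
          refine Finset.sum_le_sum (fun j hj => ?_)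
          have hjd : j ≤ d := by have := Finset.mem_range.mp hj; omega
          have hnn : (0 : ℤ) ≤ (d : ℤ) - j := by
            have : (j : ℤ) ≤ d := by exact_mod_cast hjd
            linarith
          rw [abs_mul, abs_of_nonneg hnn]
          have hk := stmt9_key_alpha d j hjd T σ hσ hσT hT
          exact mul_le_mul_of_nonneg_right (by exact_mod_cast hk) hnn
      _ = ((d : ℤ) + 1) * Sg := by rw [hSgdef, Finset.mul_sum]
  have ha := stmt9_key_a d T σ hσ hσT
  have h1 : |(T.card : ℤ) - (insert σ T).card| = 1 := by
    rw [hcard]; simp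
  have habs : |stmt9V n d T - stmt9V n d (insert σ T)| ≤
      1 + ((d : ℤ) + 1) + ((d : ℤ) + 1) * Sg := by
    rw [hexpand]
    calc |(((T.card : ℤ) - (insert σ T).card) + ((stmt9A d T : ℤ) - stmt9A d (insert σ T))) +
        ∑ j ∈ Finset.range (d + 1),
          ((stmt9Alpha d j T : ℤ) - stmt9Alpha d j (insert σ T)) * ((d : ℤ) - (j : ℤ))|
        ≤ |((T.card : ℤ) - (insert σ T).card) + ((stmt9A d T : ℤ) - stmt9A d (insert σ T))| +
          |∑ j ∈ Finset.range (d + 1),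
            ((stmt9Alpha d j T : ℤ) - stmt9Alpha d j (insert σ T)) * ((d : ℤ) - (j : ℤ))| :=
          abs_add_le _ _
      _ ≤ (|(T.card : ℤ) - (insert σ T).card| + |(stmt9A d T : ℤ) - stmt9A d (insert σ T)|) +
          ((d : ℤ) + 1) * Sg := add_le_add (abs_add_le _ _) hα
      _ ≤ 1 + ((d : ℤ) + 1) + ((d : ℤ) + 1) * Sg := by
          rw [h1]; linarith [ha]
  have hd' : (2 : ℤ) ≤ d := by exact_mod_cast hd
  have hdn : (0 : ℤ) ≤ (d : ℤ) := by positivity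
  refine le_trans habs ?_
  nlinarith [hSg, hd', mul_nonneg (mul_nonneg (sub_nonneg.mpr hd') hdn) hdn,
    mul_nonneg (sub_nonneg.mpr hd') hdn]

/-- If `Y'` is obtained from `Y` by adding or deleting a single `d`-simplex,
then `|a(Y)-a(Y')| ≤ d+1`, `|α_j(Y)-α_j(Y')| ≤ d+1` for every `0 ≤ j ≤ d`,
and consequently `|v(Y)-v(Y')| ≤ 2d³` (for `d ≥ 2`). -/
theorem stmt9 (n d : ℕ) (hd : 2 ≤ d) (hn : d + 1 ≤ n)
    (S S' : Finset (Finset (Fin n)))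
    (hS : ∀ s ∈ S, s.card = d + 1)
    (σ : Finset (Fin n)) (hσ : σ.card = d + 1)
    (hchange : (σ ∉ S ∧ S' = insert σ S) ∨ (σ ∉ S' ∧ S = insert σ S')) :
    |(stmt9A d S : ℤ) - (stmt9A d S' : ℤ)| ≤ d + 1 ∧
    (∀ j ≤ d, |(stmt9Alpha d j S : ℤ) - (stmt9Alpha d j S' : ℤ)| ≤ d + 1) ∧
    |stmt9V n d S - stmt9V n d S'| ≤ 2 * d ^ 3 := by
  rcases hchange with ⟨hσS, hS'⟩ | ⟨hσS', hSeq⟩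
  · subst hS'
    exact ⟨stmt9_key_a d S σ hσ hσS,
      fun j hj => stmt9_key_alpha d j hj S σ hσ hσS hS,
      stmt9_key_v n d hd S σ hσ hσS hS⟩
  · subst hSeq
    have hS'card : ∀ s ∈ S', s.card = d + 1 := fun s hs => hS s (mem_insert_of_mem hs)
    refine ⟨?_, fun j hj => ?_, ?_⟩
    · rw [abs_sub_comm]
      exact stmt9_key_a d S' σ hσ hσS'
    · rw [abs_sub_comm]
      exact stmt9_key_alpha d j hj S' σ hσ hσS' hS'card
    · rw [abs_sub_comm]
      exact stmt9_key_v n d hd S' σ hσ hσS' hS'card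
end

section
/- In a d-dimensional core complex, every vertex that belongs to some d-face belongs to at least d+1 of the d-faces. -/
/-- A pure `d`-dimensional complex, given by its `Finset` `S` of `d`-faces
(`(d+1)`-element vertex sets), is a core if it is nonempty and every
`(d-1)`-face of it lies in at least two `d`-faces. -/
def IsCore13 {V : Type} [DecidableEq V] (d : ℕ) (S : Finset (Finset V)) : Prop :=
  S.Nonempty ∧ (∀ σ ∈ S, σ.card = d + 1) ∧
    ∀ τ : Finset V, τ.card = d → (∃ σ ∈ S, τ ⊆ σ) →
      2 ≤ (S.filter (fun σ => τ ⊆ σ)).card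

/-- In a `d`-dimensional core complex, every vertex contained in some `d`-face
is contained in at least `d+1` of the `d`-faces. -/
theorem stmt13 {V : Type} [DecidableEq V] (d : ℕ) (hd : 1 ≤ d)
    (S : Finset (Finset V)) (hcore : IsCore13 d S) (u : V)
    (hu : 0 < (S.filter (fun σ => u ∈ σ)).card) :
    d + 1 ≤ (S.filter (fun σ => u ∈ σ)).card := by
  classical
  obtain ⟨hne, hcard, hcov⟩ := hcore
  obtain ⟨σ, hσ⟩ := Finset.card_pos.mp hu
  rw [Finset.mem_filter] at hσ
  obtain ⟨hσS, huσ⟩ := hσ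
  -- for each w in σ.erase u, pick a second face covering σ.erase w
  have key : ∀ w ∈ σ.erase u, ∃ ρ ∈ S, σ.erase w ⊆ ρ ∧ ρ ≠ σ := by
    intro w hw
    obtain ⟨hwu, hwσ⟩ := Finset.mem_erase.mp hw
    have hτ : (σ.erase w).card = d := by
      rw [Finset.card_erase_of_mem hwσ, hcard σ hσS]; omega
    have h2 := hcov (σ.erase w) hτ ⟨σ, hσS, Finset.erase_subset _ _⟩
    obtain ⟨ρ, hρ, hρσ⟩ :=
      Finset.exists_mem_ne (s := S.filter (fun σ' => σ.erase w ⊆ σ')) (by omega) σ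
    rw [Finset.mem_filter] at hρ
    exact ⟨ρ, hρ.1, hρ.2, hρσ⟩
  choose f hfS hfsub hfne using key
  -- the image of f, plus σ, is inside the filter
  set T := S.filter (fun σ => u ∈ σ) with hT
  have hfT : ∀ w (hw : w ∈ σ.erase u), f w hw ∈ T := by
    intro w hw
    obtain ⟨hwu, hwσ⟩ := Finset.mem_erase.mp hw
    refine Finset.mem_filter.mpr ⟨hfS w hw, ?_⟩
    exact hfsub w hw (Finset.mem_erase.mpr ⟨Ne.symm hwu, huσ⟩)
  have hinj : ∀ w (hw : w ∈ σ.erase u) w' (hw' : w' ∈ σ.erase u),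
      f w hw = f w' hw' → w = w' := by
    intro w hw w' hw' heq
    by_contra hne'
    apply hfne w hw
    refine (Finset.eq_of_subset_of_card_le ?_ ?_).symm
    · intro x hx
      by_cases hxw : x = w
      · subst hxw
        have hmem : x ∈ σ.erase w' := Finset.mem_erase.mpr ⟨hne', hx⟩
        have := hfsub w' hw' hmem
        rwa [← heq] at this
      · exact hfsub w hw (Finset.mem_erase.mpr ⟨hxw, hx⟩)
    · rw [hcard σ hσS, hcard _ (hfS w hw)]
  -- the attached image
  have himg : ((σ.erase u).attach.image (fun x => f x.1 x.2)) ⊆ T := by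
    intro ρ hρ
    obtain ⟨x, _, rfl⟩ := Finset.mem_image.mp hρ
    exact hfT x.1 x.2
  have hσnotin : σ ∉ ((σ.erase u).attach.image (fun x => f x.1 x.2)) := by
    intro h
    obtain ⟨x, _, hx⟩ := Finset.mem_image.mp h
    exact hfne x.1 x.2 hx
  have hsub : insert σ ((σ.erase u).attach.image (fun x => f x.1 x.2)) ⊆ T := by
    intro ρ hρ
    rcases Finset.mem_insert.mp hρ with rfl | h
    · exact Finset.mem_filter.mpr ⟨hσS, huσ⟩
    · exact himg h
  have hcardimg : ((σ.erase u).attach.image (fun x => f x.1 x.2)).card = d := by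
    rw [Finset.card_image_of_injective _ ?_, Finset.card_attach,
      Finset.card_erase_of_mem huσ, hcard σ hσS]
    · rfl
    · intro x y hxy
      exact Subtype.ext (hinj x.1 x.2 y.1 y.2 hxy)
  calc d + 1 = (insert σ ((σ.erase u).attach.image (fun x => f x.1 x.2))).card := by
        rw [Finset.card_insert_of_notMem hσnotin, hcardimg]
    _ ≤ T.card := Finset.card_le_card hsub
end
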